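/- arXiv:1803.08980 — 2 statements merged into one kernel-verified Lean document; each statement's English description precedes it below -/
import Mathlib

section
/- Let Assumptions 1–4' hold and let γ be either non-decreasing on [0,∞) or C¹. Then there exists a function τ : ℝ^d → (0,∞) such that: (i) inf_{x ∈ K} τ(x) > 0 for every compact set K ⊆ ℝ^d; (ii) for every x* ≠ 0 there exists a solution ξ : [0, τ(x*)] → ℝ^d of ξ'(t) = F(ξ(t), 𝒰(x*)) with ξ(0) = x*, and this solution satisfies the strict inequality W(ξ(t), 𝒰(x*)) < -σ·γ(V(ξ(t))) for all t ∈ [0, τ(x*)). -/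
/-!
Fix `x* ≠ 0` and freeze the control `u = 𝒰(x*)`. On the compact sublevel set `B(x*)` the field
`F(·, u)` is `κ(x*)`-Lipschitz; extend it to a globally Lipschitz field and solve the ODE by
Picard–Lindelöf, so that by Grönwall the solution stays within `2 |F(x*, u)| t` of `x*`. As long as
it stays in `B(x*)`, the Lipschitz bounds on `F(·, u)` and `∇V` together with Assumption 4' keep
`⟪∇V(ξ), F(ξ, u)⟫` within `(1 - σ)/4` of its initial value `≤ -γ(V(x*)) < 0`; in particular `V ∘ ξ`
cannot cross the level `V(x*)`, so the solution never leaves `B(x*)`. Monotonicity or local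
Lipschitz continuity of `γ` bounds `γ(V(ξ t))` by `γ(V(x*))` up to the same margin. The time
`τ(x*)` is an explicit decreasing function of the local constants, and these are bounded on compact
sets, which gives the uniform positivity.
-/

open Set Metric
open scoped InnerProductSpace NNReal

/-- Junk value `0` when `f` is not Lipschitz on `s` (the supremum is then unbounded). -/
noncomputable def lipConst {α β : Type*} [PseudoMetricSpace α] [PseudoMetricSpace β]
    (f : α → β) (s : Set α) : ℝ≥0 :=
  ⨆ p : s × s, nndist (f p.1) (f p.2) / nndist (p.1 : α) p.2

namespace LipschitzOnWith

variable {α β : Type*} [MetricSpace α] [PseudoMetricSpace β] {f : α → β} {s t : Set α} {K : ℝ≥0}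

lemma bddAbove_range_nndist_div (hf : LipschitzOnWith K f s) :
    BddAbove (range fun p : s × s => nndist (f p.1) (f p.2) / nndist (p.1 : α) p.2) :=
  ⟨K, forall_mem_range.2 fun p => div_le_of_le_mul₀ (by positivity) (by positivity)
    (by exact_mod_cast hf.dist_le_mul p.1 p.1.2 p.2 p.2.2)⟩

lemma lipschitzOnWith_lipConst (hf : LipschitzOnWith K f s) :
    LipschitzOnWith (lipConst f s) f s := by
  refine LipschitzOnWith.of_dist_le_mul fun x hx y hy => ?_
  rcases eq_or_ne x y with rfl | hxy
  · simp
  have hratio : nndist (f x) (f y) / nndist x y ≤ lipConst f s :=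
    le_ciSup hf.bddAbove_range_nndist_div (⟨x, hx⟩, ⟨y, hy⟩)
  have hpos : 0 < nndist x y := by exact_mod_cast dist_pos.2 hxy
  exact_mod_cast (div_le_iff₀ hpos).1 hratio

lemma lipConst_mono (hf : LipschitzOnWith K f t) (hst : s ⊆ t) : lipConst f s ≤ lipConst f t :=
  ciSup_le' fun p => le_ciSup (f := fun p : t × t => nndist (f p.1) (f p.2) / nndist (p.1 : α) p.2)
    hf.bddAbove_range_nndist_div (inclusion hst p.1, inclusion hst p.2)

end LipschitzOnWith

open Classical in
noncomputable def slopeBelow (γ : ℝ → ℝ) (v : ℝ) : ℝ≥0 :=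
  if MonotoneOn γ (Ici 0) then 0 else lipConst γ (Icc 0 v)

section slopeBelow

variable {γ : ℝ → ℝ}

lemma le_add_slopeBelow_mul (hγ : MonotoneOn γ (Ici 0) ∨ LocallyLipschitz γ) {a v : ℝ}
    (ha : a ∈ Icc 0 v) : γ a ≤ γ v + slopeBelow γ v * (v - a) := by
  unfold slopeBelow
  split_ifs with hmono
  · simpa using hmono ha.1 (ha.1.trans ha.2) ha.2
  · obtain ⟨K, hK⟩ := (hγ.resolve_left hmono).locallyLipschitzOn.exists_lipschitzOnWith_of_compact
      (isCompact_Icc (a := 0) (b := v))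
    have := hK.lipschitzOnWith_lipConst.dist_le_mul a ha v ⟨ha.1.trans ha.2, le_rfl⟩
    rw [Real.dist_eq, Real.dist_eq, abs_of_nonpos (by linarith [ha.2] : a - v ≤ 0)] at this
    linarith [le_abs_self (γ a - γ v)]

lemma slopeBelow_mono (hγ : MonotoneOn γ (Ici 0) ∨ LocallyLipschitz γ) {v w : ℝ} (hvw : v ≤ w) :
    slopeBelow γ v ≤ slopeBelow γ w := by
  unfold slopeBelow
  split_ifs with hmono
  · exact le_rfl
  · obtain ⟨K, hK⟩ := (hγ.resolve_left hmono).locallyLipschitzOn.exists_lipschitzOnWith_of_compact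
      (isCompact_Icc (a := 0) (b := w))
    exact hK.lipConst_mono (Icc_subset_Icc le_rfl hvw)

end slopeBelow

lemma isCompact_setOf_le_of_coercive {E : Type*} [NormedAddCommGroup E] [ProperSpace E]
    {V : E → ℝ} (hV : Continuous V) (hrad : ∀ c : ℝ, ∃ R : ℝ, ∀ x, R ≤ ‖x‖ → c ≤ V x) (c : ℝ) :
    IsCompact {x | V x ≤ c} := by
  obtain ⟨R, hR⟩ := hrad (c + 1)
  refine isCompact_of_isClosed_isBounded (isClosed_le hV continuous_const)
    (isBounded_iff_forall_norm_le.2 ⟨R, fun x hx => ?_⟩)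
  by_contra! hxR
  linarith [hR x hxR.le, show V x ≤ c from hx]

lemma abs_inner_sub_inner_le {E : Type*} [NormedAddCommGroup E] [InnerProductSpace ℝ E]
    (a b a₀ b₀ : E) : |⟪a, b⟫_ℝ - ⟪a₀, b₀⟫_ℝ| ≤ ‖a - a₀‖ * ‖b‖ + ‖a₀‖ * ‖b - b₀‖ := by
  have hsplit : ⟪a, b⟫_ℝ - ⟪a₀, b₀⟫_ℝ = ⟪a - a₀, b⟫_ℝ + ⟪a₀, b - b₀⟫_ℝ := by
    rw [inner_sub_left, inner_sub_right]; ring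
  rw [hsplit]
  exact (abs_add_le _ _).trans
    (add_le_add (abs_real_inner_le_norm _ _) (abs_real_inner_le_norm _ _))

open Real in
theorem LipschitzWith.exists_hasDerivWithinAt_norm_sub_le {E : Type*} [NormedAddCommGroup E]
    [NormedSpace ℝ E] [CompleteSpace E] {g : E → E} {K : ℝ≥0} (hg : LipschitzWith K g) (x₀ : E)
    {T : ℝ} (hT : 0 ≤ T) (hKT : (K + 1) * T ≤ 1) :
    ∃ ξ : ℝ → E, ξ 0 = x₀ ∧ ∀ t ∈ Icc 0 T,
      HasDerivWithinAt ξ (g (ξ t)) (Icc 0 T) t ∧ ‖ξ t - x₀‖ ≤ 2 * ‖g x₀‖ * t := by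
  set P := ‖g x₀‖
  have hgrowth : ∀ x, ‖g x‖ ≤ K * ‖x - x₀‖ + P := fun x =>
    (norm_le_norm_sub_add (g x) (g x₀)).trans (by gcongr; exact hg.norm_sub_le x x₀)
  have hpl : IsPicardLindelof (fun _ => g) (tmin := 0) (tmax := T) ⟨0, le_rfl, hT⟩ x₀
      ⟨P + 1, by positivity⟩ 0 ⟨(K + 1) * (P + 1), by positivity⟩ K := by
    refine .of_time_independent (fun x hx => ?_) hg.lipschitzOnWith ?_
    · have hx : ‖x - x₀‖ ≤ P + 1 := mem_closedBall_iff_norm.1 hx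
      show ‖g x‖ ≤ (K + 1) * (P + 1)
      nlinarith [hgrowth x, norm_nonneg (g x₀)]
    · show (K + 1 : ℝ) * (P + 1) * max (T - 0) (0 - 0) ≤ P + 1 - 0
      rw [sub_zero, sub_self, max_eq_left hT]
      nlinarith [norm_nonneg (g x₀)]
  obtain ⟨ξ, hξ0, hξ⟩ := hpl.exists_eq_forall_mem_Icc_hasDerivWithinAt₀
  -- Grönwall with rate `K + 1` rather than `K`, to avoid the special form of `gronwallBound` at `0`
  have hgron : ∀ t ∈ Icc 0 T, ‖ξ t - x₀‖ ≤ gronwallBound 0 (K + 1) P (t - 0) :=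
    norm_le_gronwallBound_of_norm_deriv_right_le
      (fun t ht => ((hξ t ht).sub_const x₀).continuousWithinAt)
      (fun t ht => ((hξ t (Ico_subset_Icc_self ht)).sub_const x₀).mono_of_mem_nhdsWithin
        (Icc_mem_nhdsGE_of_mem ht))
      (by simp [hξ0]) (fun t _ => by linarith [hgrowth (ξ t), norm_nonneg (ξ t - x₀)])
  refine ⟨ξ, hξ0, fun t ht => ⟨hξ t ht, ?_⟩⟩
  have hKt : |(K + 1) * t| ≤ 1 := by
    rw [abs_of_nonneg (by positivity [ht.1])]
    exact (mul_le_mul_of_nonneg_left ht.2 (by positivity)).trans hKT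
  have hexp := (abs_le.1 (abs_exp_sub_one_le hKt)).2
  rw [abs_of_nonneg (by positivity [ht.1])] at hexp
  calc ‖ξ t - x₀‖ ≤ P / (K + 1) * (exp ((K + 1) * t) - 1) := by
        simpa [gronwallBound_of_K_ne_0 (by positivity : (K : ℝ) + 1 ≠ 0)] using hgron t ht
    _ ≤ P / (K + 1) * (2 * ((K + 1) * t)) := by gcongr
    _ = 2 * P * t := by field_simp

noncomputable def stepTime (σ : ℝ) (κ ν L : ℝ≥0) (M : ℝ) : ℝ :=
  (1 - σ) / (8 * (M * (3 * ν + κ) + L + κ + 1))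

section stepTime

variable {σ M M' : ℝ} {κ ν L κ' ν' L' : ℝ≥0}

lemma stepTime_pos (hσ : σ < 1) (hM : 0 ≤ M) : 0 < stepTime σ κ ν L M := by
  unfold stepTime
  apply div_pos (by linarith)
  positivity

lemma stepTime_le (hσ : σ < 1) (hM : 0 ≤ M) (hκ : κ ≤ κ') (hν : ν ≤ ν') (hL : L ≤ L')
    (hMM' : M ≤ M') : stepTime σ κ' ν' L' M' ≤ stepTime σ κ ν L M := by
  unfold stepTime
  have : 0 ≤ 1 - σ := by linarith
  have : 0 ≤ M' := hM.trans hMM'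
  gcongr

lemma add_one_mul_stepTime_le (hσ0 : 0 ≤ σ) (hM : 0 ≤ M) : (κ + 1) * stepTime σ κ ν L M ≤ 1 := by
  unfold stepTime
  rw [mul_div_assoc', div_le_one (by positivity)]
  nlinarith [show (0 : ℝ) ≤ M * (3 * ν + κ) by positivity, L.coe_nonneg]

lemma stepTime_mul_le (hσ : σ < 1) (hM : 0 ≤ M) :
    8 * stepTime σ κ ν L M * (M * (3 * ν + κ) + L) ≤ 1 - σ := by
  unfold stepTime
  have hden : (0 : ℝ) < 8 * (M * (3 * ν + κ) + L + κ + 1) := by positivity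
  rw [mul_comm 8, mul_assoc, div_mul_eq_mul_div, div_le_iff₀ hden]
  nlinarith [show (0 : ℝ) ≤ M * (3 * ν + κ) by positivity, L.coe_nonneg, κ.coe_nonneg]

end stepTime

lemma abs_inner_sub_inner_le_of_lipschitz {E : Type*} [NormedAddCommGroup E]
    [InnerProductSpace ℝ E] {G g : E → E} {s : Set E} {ν κ : ℝ≥0} (hG : LipschitzOnWith ν G s)
    (hg : LipschitzWith κ g) {x₀ x : E} (hx₀ : x₀ ∈ s) (hx : x ∈ s) {T : ℝ} (hT : 0 ≤ T)
    (hκT : κ * T ≤ 1) (hxT : ‖x - x₀‖ ≤ 2 * ‖g x₀‖ * T) :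
    |⟪G x, g x⟫_ℝ - ⟪G x₀, g x₀⟫_ℝ| ≤
      2 * T * (3 * ν + κ) * (‖G x₀‖ * ‖g x₀‖ + ‖g x₀‖ ^ 2) := by
  set P := ‖g x₀‖
  have hG' : ‖G x - G x₀‖ ≤ ν * (2 * P * T) :=
    (hG.norm_sub_le hx hx₀).trans (by gcongr)
  have hg' : ‖g x - g x₀‖ ≤ κ * (2 * P * T) :=
    (hg.norm_sub_le x x₀).trans (by gcongr)
  have hgx : ‖g x‖ ≤ 3 * P := by
    have := norm_le_norm_sub_add (g x) (g x₀)
    nlinarith [norm_nonneg (g x₀)]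
  calc |⟪G x, g x⟫_ℝ - ⟪G x₀, g x₀⟫_ℝ|
      ≤ ‖G x - G x₀‖ * ‖g x‖ + ‖G x₀‖ * ‖g x - g x₀‖ := abs_inner_sub_inner_le _ _ _ _
    _ ≤ ν * (2 * P * T) * (3 * P) + ‖G x₀‖ * (κ * (2 * P * T)) := by gcongr
    _ ≤ 2 * T * (3 * ν + κ) * (‖G x₀‖ * P + P ^ 2) := by
      have : 0 ≤ T * P := by positivity
      nlinarith [mul_nonneg (mul_nonneg this (norm_nonneg (G x₀))) ν.coe_nonneg,
        mul_nonneg (mul_nonneg this (norm_nonneg (g x₀))) κ.coe_nonneg]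

lemma DifferentiableAt.hasDerivWithinAt_comp_inner_gradient {E : Type*} [NormedAddCommGroup E]
    [InnerProductSpace ℝ E] [CompleteSpace E] {V : E → ℝ} {ξ : ℝ → E} {v : E} {s : Set ℝ}
    {t : ℝ} (hV : DifferentiableAt ℝ V (ξ t)) (hξ : HasDerivWithinAt ξ v s t) :
    HasDerivWithinAt (fun t => V (ξ t)) ⟪gradient V (ξ t), v⟫_ℝ s t := by
  have h := hV.hasGradientAt.hasFDerivAt.comp_hasDerivWithinAt t hξ
  rwa [InnerProductSpace.toDual_apply_apply] at h

section Decrease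

variable {E : Type*} [NormedAddCommGroup E] [InnerProductSpace ℝ E] [CompleteSpace E]
  {V : E → ℝ} {g : E → E} {x₀ : E} {κ ν : ℝ≥0} {M T : ℝ}

theorem exists_solution_mem_sublevel_abs_inner_sub_le (hV : Differentiable ℝ V)
    (hg : LipschitzWith κ g) (hgrad : LipschitzOnWith ν (gradient V) {x | V x ≤ V x₀})
    (hW₀ : ⟪gradient V x₀, g x₀⟫_ℝ < 0)
    (hM : ‖gradient V x₀‖ * ‖g x₀‖ + ‖g x₀‖ ^ 2 ≤ M * |⟪gradient V x₀, g x₀⟫_ℝ|)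
    (hT : 0 ≤ T) (hκT : (κ + 1) * T ≤ 1) {θ : ℝ} (hθ : θ < 1)
    (hTM : 2 * T * (3 * ν + κ) * M ≤ θ) :
    ∃ ξ : ℝ → E, ξ 0 = x₀ ∧ ∀ t ∈ Icc 0 T, HasDerivWithinAt ξ (g (ξ t)) (Icc 0 T) t ∧
      V (ξ t) ≤ V x₀ ∧
      |⟪gradient V (ξ t), g (ξ t)⟫_ℝ - ⟪gradient V x₀, g x₀⟫_ℝ| ≤
        θ * |⟪gradient V x₀, g x₀⟫_ℝ| := by
  obtain ⟨ξ, hξ0, hξ⟩ := hg.exists_hasDerivWithinAt_norm_sub_le x₀ hT hκT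
  have hdrift : ∀ t ∈ Icc 0 T, V (ξ t) ≤ V x₀ →
      |⟪gradient V (ξ t), g (ξ t)⟫_ℝ - ⟪gradient V x₀, g x₀⟫_ℝ| ≤
        θ * |⟪gradient V x₀, g x₀⟫_ℝ| := fun t ht hVt =>
    (abs_inner_sub_inner_le_of_lipschitz hgrad hg (le_refl (V x₀)) hVt hT (by nlinarith)
      ((hξ t ht).2.trans (by gcongr; exact ht.2))).trans <|
    calc _ ≤ 2 * T * (3 * ν + κ) * (M * |⟪gradient V x₀, g x₀⟫_ℝ|) := by gcongr
      _ ≤ θ * |⟪gradient V x₀, g x₀⟫_ℝ| := by rw [← mul_assoc]; gcongr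
  have hVξ (t) (ht : t ∈ Icc 0 T) := (hV (ξ t)).hasDerivWithinAt_comp_inner_gradient (hξ t ht).1
  -- where `V ∘ ξ` reaches the level `V x₀`, its derivative is at most `(1 - θ) ⟪∇V x₀, g x₀⟫ < 0`
  have hinv : ∀ t ∈ Icc 0 T, V (ξ t) ≤ V x₀ :=
    image_le_of_deriv_right_lt_deriv_boundary' (B := fun _ => V x₀) (B' := 0)
      (fun t ht => (hVξ t ht).continuousWithinAt)
      (fun t ht => (hVξ t (Ico_subset_Icc_self ht)).mono_of_mem_nhdsWithin
        (Icc_mem_nhdsGE_of_mem ht))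
      (by simp [hξ0]) continuousOn_const (fun _ _ => hasDerivWithinAt_const _ _ _)
      (fun t ht hVt => by
        have := (abs_le.1 (hdrift t (Ico_subset_Icc_self ht) hVt.le)).2
        rw [abs_of_neg hW₀] at this
        simp only [Pi.zero_apply]
        nlinarith)
  exact ⟨ξ, hξ0, fun t ht => ⟨(hξ t ht).1, hinv t ht, hdrift t ht (hinv t ht)⟩⟩

theorem exists_solution_inner_gradient_lt (hV : Differentiable ℝ V) {γ : ℝ → ℝ} {σ : ℝ}
    (hσ0 : 0 ≤ σ) (hσ1 : σ < 1) {f : E → E} {L : ℝ≥0}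
    (hg : LipschitzWith κ g) (hfg : EqOn f g {x | V x ≤ V x₀})
    (hgrad : LipschitzOnWith ν (gradient V) {x | V x ≤ V x₀})
    (hdecr : ⟪gradient V x₀, f x₀⟫_ℝ ≤ -γ (V x₀)) (hγ : 0 < γ (V x₀))
    (hM : ‖gradient V x₀‖ * ‖f x₀‖ + ‖f x₀‖ ^ 2 ≤ M * |⟪gradient V x₀, f x₀⟫_ℝ|)
    (hL : ∀ x, V x ≤ V x₀ → γ (V x) ≤ γ (V x₀) + L * (V x₀ - V x))
    (hT : 0 ≤ T) (hκT : (κ + 1) * T ≤ 1) (hTC : 8 * T * (M * (3 * ν + κ) + L) ≤ 1 - σ) :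
    ∃ ξ : ℝ → E, ξ 0 = x₀ ∧ ∀ t ∈ Icc 0 T, HasDerivWithinAt ξ (f (ξ t)) (Icc 0 T) t ∧
      ⟪gradient V (ξ t), f (ξ t)⟫_ℝ < -σ * γ (V (ξ t)) := by
  rw [hfg (le_refl (V x₀))] at hdecr hM
  set w := -⟪gradient V x₀, g x₀⟫_ℝ
  have hw : 0 < w := by linarith
  have habs : |⟪gradient V x₀, g x₀⟫_ℝ| = w := abs_of_neg (by linarith)
  rw [habs] at hM
  have hM0 : 0 ≤ M := nonneg_of_mul_nonneg_left ((by positivity : (0 : ℝ) ≤ _).trans hM) hw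
  have h3νκ : 0 ≤ M * (3 * ν + κ) := by positivity
  obtain ⟨ξ, hξ0, hξ⟩ := exists_solution_mem_sublevel_abs_inner_sub_le hV hg hgrad (by linarith)
    (by rwa [habs]) hT hκT (θ := (1 - σ) / 4) (by linarith) (by nlinarith [L.coe_nonneg])
  simp only [habs] at hξ
  have hVlow : ∀ t ∈ Icc 0 T, V x₀ - V (ξ t) ≤ 2 * w * T := fun t ht => by
    have h := norm_image_sub_le_of_norm_deriv_le_segment' (C := 2 * w)
      (fun s hs => (hV (ξ s)).hasDerivWithinAt_comp_inner_gradient (hξ s hs).1) (fun s hs => by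
        have := abs_le.1 (hξ s (Ico_subset_Icc_self hs)).2.2
        rw [Real.norm_eq_abs, abs_le]
        constructor <;> nlinarith) t ht
    rw [hξ0, Real.norm_eq_abs, sub_zero] at h
    nlinarith [neg_abs_le (V (ξ t) - V x₀), ht.2]
  refine ⟨ξ, hξ0, fun t ht => ?_⟩
  obtain ⟨hξt, hB, hW⟩ := hξ t ht
  rw [hfg hB]
  refine ⟨hξt, ?_⟩
  have hγt : γ (V (ξ t)) ≤ w + L * (2 * w * T) := (hL (ξ t) hB).trans
    (add_le_add (by linarith) (mul_le_mul_of_nonneg_left (hVlow t ht) L.coe_nonneg))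
  have hσL : σ * (L * (2 * w * T)) ≤ (1 - σ) / 4 * w := by
    have h8TL : 8 * T * L * w ≤ (1 - σ) * w := mul_le_mul_of_nonneg_right (by nlinarith) hw.le
    have h1σ : 0 ≤ 1 - σ := by linarith
    nlinarith [mul_le_mul_of_nonneg_left h8TL hσ0, mul_nonneg (mul_nonneg h1σ h1σ) hw.le]
  linarith [(abs_le.1 hW).2, mul_le_mul_of_nonneg_left hγt hσ0, mul_pos (sub_pos.2 hσ1) hw]

end Decrease

theorem statement2_general
    (d m : ℕ)
    (F : EuclideanSpace ℝ (Fin d) → EuclideanSpace ℝ (Fin m) → EuclideanSpace ℝ (Fin d))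
    (𝒰 : EuclideanSpace ℝ (Fin d) → EuclideanSpace ℝ (Fin m))
    (V : EuclideanSpace ℝ (Fin d) → ℝ) (γ : ℝ → ℝ) (σ : ℝ)
    (hσ0 : 0 < σ) (hσ1 : σ < 1)
    (hγpos : ∀ v : ℝ, 0 < v → 0 < γ v)
    (hV : ContDiff ℝ 1 V) (hV0 : V 0 = 0) (hVpos : ∀ x, x ≠ 0 → 0 < V x)
    (hVrad : ∀ c : ℝ, ∃ R : ℝ, ∀ x : EuclideanSpace ℝ (Fin d), R ≤ ‖x‖ → c ≤ V x)
    (hfeed : ∀ x, x ≠ 0 → ⟪gradient V x, F x (𝒰 x)⟫_ℝ ≤ -γ (V x))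
    -- Assumption 2: the Lipschitz constant `κ(x*)` of `F(·,𝒰(x*))` on `B(x*)` is bounded
    -- on every compact set
    (κ : EuclideanSpace ℝ (Fin d) → ℝ)
    (hκlip : ∀ xs x1 x2 : EuclideanSpace ℝ (Fin d), V x1 ≤ V xs → V x2 ≤ V xs →
      ‖F x1 (𝒰 xs) - F x2 (𝒰 xs)‖ ≤ κ xs * ‖x1 - x2‖)
    (hκbdd : ∀ K : Set (EuclideanSpace ℝ (Fin d)), IsCompact K → ∃ C : ℝ, ∀ x ∈ K, κ x ≤ C)
    -- Assumption 3: the gradient of `V` is locally Lipschitz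
    (hgradlip : LocallyLipschitz (gradient V))
    -- Assumption 4': non-degeneracy with a locally bounded `M`
    (M : EuclideanSpace ℝ (Fin d) → ℝ) (hMpos : ∀ x, 0 < M x)
    (hMbdd : ∀ K : Set (EuclideanSpace ℝ (Fin d)), IsCompact K → ∃ C : ℝ, ∀ x ∈ K, M x ≤ C)
    (hMineq : ∀ x, ‖gradient V x‖ * ‖F x (𝒰 x)‖ + ‖F x (𝒰 x)‖ ^ 2 ≤
      M x * |⟪gradient V x, F x (𝒰 x)⟫_ℝ|)
    -- `γ` is either non-decreasing on `[0,∞)` or `C¹`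
    (hγreg : MonotoneOn γ (Ici (0 : ℝ)) ∨ ContDiff ℝ 1 γ) :
    ∃ τ : EuclideanSpace ℝ (Fin d) → ℝ,
      (∀ x, 0 < τ x) ∧
      (∀ K : Set (EuclideanSpace ℝ (Fin d)), IsCompact K → ∃ ε > (0 : ℝ), ∀ x ∈ K, ε ≤ τ x) ∧
      (∀ xs : EuclideanSpace ℝ (Fin d), xs ≠ 0 →
        ∃ ξ : ℝ → EuclideanSpace ℝ (Fin d), ξ 0 = xs ∧
          (∀ t ∈ Icc (0 : ℝ) (τ xs),
            HasDerivWithinAt ξ (F (ξ t) (𝒰 xs)) (Icc (0 : ℝ) (τ xs)) t) ∧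
          (∀ t ∈ Ico (0 : ℝ) (τ xs),
            ⟪gradient V (ξ t), F (ξ t) (𝒰 xs)⟫_ℝ < -σ * γ (V (ξ t)))) := by
  have hVnn : ∀ x, 0 ≤ V x := fun x => by
    rcases eq_or_ne x 0 with rfl | hx
    exacts [hV0.ge, (hVpos x hx).le]
  have hγ : MonotoneOn γ (Ici 0) ∨ LocallyLipschitz γ := hγreg.imp_right (·.locallyLipschitz)
  have hgradB (c : ℝ) : ∃ K, LipschitzOnWith K (gradient V) {x | V x ≤ c} :=
    hgradlip.locallyLipschitzOn.exists_lipschitzOnWith_of_compact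
      (isCompact_setOf_le_of_coercive hV.continuous hVrad c)
  set cE := lipschitzExtensionConstant (EuclideanSpace ℝ (Fin d))
  refine ⟨fun x => stepTime σ (cE * (κ x).toNNReal) (lipConst (gradient V) {y | V y ≤ V x})
    (slopeBelow γ (V x)) (M x), fun x => stepTime_pos hσ1 (hMpos x).le, fun K hK => ?_,
    fun xs hxs => ?_⟩
  · obtain ⟨c, hc⟩ := hK.bddAbove_image hV.continuous.continuousOn
    obtain ⟨Cκ, hCκ⟩ := hκbdd K hK
    obtain ⟨CM, hCM⟩ := hMbdd K hK
    obtain ⟨Kc, hKc⟩ := hgradB c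
    refine ⟨stepTime σ (cE * Cκ.toNNReal) (lipConst (gradient V) {y | V y ≤ c}) (slopeBelow γ c)
      (max CM 0), stepTime_pos hσ1 le_sup_right, fun x hx => ?_⟩
    have hVx : V x ≤ c := hc (mem_image_of_mem V hx)
    exact stepTime_le hσ1 (hMpos x).le (by gcongr; exact hCκ x hx)
      (hKc.lipConst_mono fun y hy => le_trans hy hVx) (slopeBelow_mono hγ hVx)
      ((hCM x hx).trans le_sup_left)
  · have hf : LipschitzOnWith (κ xs).toNNReal (F · (𝒰 xs)) {x | V x ≤ V xs} :=
      .of_dist_le_mul fun x hx y hy => by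
        rw [dist_eq_norm, dist_eq_norm]
        exact (hκlip xs x y hx hy).trans (by gcongr; exact Real.le_coe_toNNReal _)
    obtain ⟨g, hg, hfg⟩ := hf.extend_finite_dimension
    obtain ⟨Kg, hKg⟩ := hgradB (V xs)
    obtain ⟨ξ, hξ0, hξ⟩ := exists_solution_inner_gradient_lt (hV.differentiable one_ne_zero)
      hσ0.le hσ1 hg hfg hKg.lipschitzOnWith_lipConst (hfeed xs hxs) (hγpos _ (hVpos xs hxs))
      (hMineq xs) (fun x hx => le_add_slopeBelow_mul hγ ⟨hVnn x, hx⟩)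
      (stepTime_pos hσ1 (hMpos xs).le).le (add_one_mul_stepTime_le hσ0.le (hMpos xs).le)
      (stepTime_mul_le hσ1 (hMpos xs).le)
    exact ⟨ξ, hξ0, fun t ht => (hξ t ht).1, fun t ht => (hξ t (Ico_subset_Icc_self ht)).2⟩

/-- Key Lemma, local version. Under Assumptions 1–4' and `γ` non-decreasing
or `C¹`, there exists `τ : ℝ^d → (0,∞)`, uniformly positive on every compact set, such that
for every `x* ≠ 0` the solution of `ξ' = F(ξ, 𝒰(x*))`, `ξ(0) = x*`, exists on `[0, τ(x*)]`
and satisfies `W(ξ(t), 𝒰(x*)) < -σ·γ(V(ξ(t)))` for `t ∈ [0, τ(x*))`. -/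
theorem statement2
    (d m : ℕ)
    (F : EuclideanSpace ℝ (Fin d) → EuclideanSpace ℝ (Fin m) → EuclideanSpace ℝ (Fin d))
    (U : Set (EuclideanSpace ℝ (Fin m)))
    (𝒰 : EuclideanSpace ℝ (Fin d) → EuclideanSpace ℝ (Fin m))
    (V : EuclideanSpace ℝ (Fin d) → ℝ) (γ : ℝ → ℝ) (σ : ℝ)
    (hσ0 : 0 < σ) (hσ1 : σ < 1)
    (hγc : Continuous γ) (hγpos : ∀ v : ℝ, 0 < v → 0 < γ v)
    (hV : ContDiff ℝ 1 V) (hV0 : V 0 = 0) (hVpos : ∀ x, x ≠ 0 → 0 < V x)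
    (hVrad : ∀ c : ℝ, ∃ R : ℝ, ∀ x : EuclideanSpace ℝ (Fin d), R ≤ ‖x‖ → c ≤ V x)
    (h𝒰U : ∀ x, 𝒰 x ∈ U)
    (hfeed : ∀ x, x ≠ 0 → ⟪gradient V x, F x (𝒰 x)⟫_ℝ ≤ -γ (V x))
    -- Assumption 1: local Lipschitz continuity of `F(·,u)` for all `u ∈ U`
    (hF : ∀ u ∈ U, LocallyLipschitz (fun x => F x u))
    -- Assumption 2: the Lipschitz constant `κ(x*)` of `F(·,𝒰(x*))` on `B(x*)` is bounded
    -- on every compact set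
    (κ : EuclideanSpace ℝ (Fin d) → ℝ)
    (hκlip : ∀ xs x1 x2 : EuclideanSpace ℝ (Fin d), V x1 ≤ V xs → V x2 ≤ V xs →
      ‖F x1 (𝒰 xs) - F x2 (𝒰 xs)‖ ≤ κ xs * ‖x1 - x2‖)
    (hκbdd : ∀ K : Set (EuclideanSpace ℝ (Fin d)), IsCompact K → ∃ C : ℝ, ∀ x ∈ K, κ x ≤ C)
    -- Assumption 3: the gradient of `V` is locally Lipschitz
    (hgradlip : LocallyLipschitz (gradient V))
    -- Assumption 4': non-degeneracy with a locally bounded `M`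
    (M : EuclideanSpace ℝ (Fin d) → ℝ) (hMpos : ∀ x, 0 < M x)
    (hMbdd : ∀ K : Set (EuclideanSpace ℝ (Fin d)), IsCompact K → ∃ C : ℝ, ∀ x ∈ K, M x ≤ C)
    (hMineq : ∀ x, ‖gradient V x‖ * ‖F x (𝒰 x)‖ + ‖F x (𝒰 x)‖ ^ 2 ≤
      M x * |⟪gradient V x, F x (𝒰 x)⟫_ℝ|)
    -- `γ` is either non-decreasing on `[0,∞)` or `C¹`
    (hγreg : MonotoneOn γ (Ici (0 : ℝ)) ∨ ContDiff ℝ 1 γ) :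
    ∃ τ : EuclideanSpace ℝ (Fin d) → ℝ,
      (∀ x, 0 < τ x) ∧
      (∀ K : Set (EuclideanSpace ℝ (Fin d)), IsCompact K → ∃ ε > (0 : ℝ), ∀ x ∈ K, ε ≤ τ x) ∧
      (∀ xs : EuclideanSpace ℝ (Fin d), xs ≠ 0 →
        ∃ ξ : ℝ → EuclideanSpace ℝ (Fin d), ξ 0 = xs ∧
          (∀ t ∈ Icc (0 : ℝ) (τ xs),
            HasDerivWithinAt ξ (F (ξ t) (𝒰 xs)) (Icc (0 : ℝ) (τ xs)) t) ∧
          (∀ t ∈ Ico (0 : ℝ) (τ xs),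
            ⟪gradient V (ξ t), F (ξ t) (𝒰 xs)⟫_ℝ < -σ * γ (V (ξ t)))) :=
  statement2_general d m F 𝒰 V γ σ hσ0 hσ1 hγpos hV hV0 hVpos hVrad hfeed κ hκlip hκbdd hgradlip M
    hMpos hMbdd hMineq hγreg
end

section
/- (Global dwell-time positivity.) Let Assumptions 1–4' hold, and suppose that κ, ν and M are globally bounded on ℝ^d, γ is C¹, and inf_{v ≥ 0} γ'(v) > -∞. Then there exists ε > 0, independent of the initial condition, such that: for every continuous x : [0,T) → ℝ^d and every sequence of sampling instants t_0 = 0 < t_1 < t_2 < … such that for each n one has x(t_n) ≠ 0, x'(t) = F(x(t), 𝒰(x(t_n))) on [t_n, t_{n+1}), W(x(t), 𝒰(x(t_n))) ≤ -σ·γ(V(x(t))) for all t ∈ [t_n, t_{n+1}], and W(x(t_{n+1}), 𝒰(x(t_n))) = -σ·γ(V(x(t_{n+1}))), one has t_{n+1} − t_n ≥ ε for all n. -/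
/-!
On a sampling interval `[a, b]` the control `u = 𝒰 (x a)` is frozen and `V` decreases along
the trajectory, so the trajectory stays in the sublevel set of `x a`, where `F · u` and `∇V` are
Lipschitz with global constants. Grönwall bounds `‖x t - x a‖` by `‖F (x a) u‖ (t - a) e^κ`, and
with Assumption 4' this bounds the drift of `φ t = ⟪∇V (x t), F (x t) u⟫` by
`C |φ a| (t - a)`. At the trigger time `φ b = -σ γ (V (x b))`, whereas `φ a ≤ -γ (V (x a))` and,
since `γ'` is bounded below, `γ (V (x b))` exceeds `γ (V (x a))` by at most a multiple of
`V (x a) - V (x b) = O(|φ a| (b - a))`. Comparing the two gives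
`(1 - σ) |φ a| ≤ D |φ a| (b - a)` with `D` independent of the initial condition.
-/

open Set
open scoped InnerProductSpace

lemma Real.exp_sub_one_le_mul_exp (y : ℝ) : Real.exp y - 1 ≤ y * Real.exp y := by
  have h := Real.one_sub_le_exp_neg y
  have hpos := Real.exp_pos y
  have : Real.exp (-y) * Real.exp y = 1 := by rw [← Real.exp_add, neg_add_cancel, Real.exp_zero]
  nlinarith

lemma gronwallBound_zero_le {K ε : ℝ} (hK : 0 ≤ K) (hε : 0 ≤ ε) (x : ℝ) :
    gronwallBound 0 K ε x ≤ ε * x * Real.exp (K * x) := by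
  rcases hK.eq_or_lt with rfl | hK
  · simp [gronwallBound_K0]
  · rw [gronwallBound_of_K_ne_0 hK.ne']
    calc 0 * Real.exp (K * x) + ε / K * (Real.exp (K * x) - 1)
        ≤ ε / K * (K * x * Real.exp (K * x)) := by
          rw [zero_mul, zero_add]
          gcongr
          exact Real.exp_sub_one_le_mul_exp _
      _ = ε * x * Real.exp (K * x) := by field_simp

theorem norm_sub_le_mul_exp_of_norm_deriv_right_le {E : Type*} [NormedAddCommGroup E]
    [NormedSpace ℝ E] {f f' : ℝ → E} {K P a b : ℝ} (hK : 0 ≤ K) (hP : 0 ≤ P)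
    (hf : ContinuousOn f (Icc a b)) (hf' : ∀ t ∈ Ico a b, HasDerivWithinAt f (f' t) (Ici t) t)
    (bound : ∀ t ∈ Ico a b, ‖f' t‖ ≤ K * ‖f t - f a‖ + P) :
    ∀ t ∈ Icc a b, ‖f t - f a‖ ≤ P * (t - a) * Real.exp (K * (t - a)) := by
  intro t ht
  refine (norm_le_gronwallBound_of_norm_deriv_right_le (δ := 0) (hf.sub continuousOn_const)
    (fun s hs => (hf' s hs).sub_const (f a)) (by simp) bound t ht).trans ?_
  exact gronwallBound_zero_le hK hP _

lemma abs_inner_sub_inner_le_s5 {F : Type*} [NormedAddCommGroup F] [InnerProductSpace ℝ F]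
    (g₀ g v₀ v : F) : |⟪g, v⟫_ℝ - ⟪g₀, v₀⟫_ℝ| ≤ ‖g - g₀‖ * ‖v‖ + ‖g₀‖ * ‖v - v₀‖ := by
  have hsplit : ⟪g, v⟫_ℝ - ⟪g₀, v₀⟫_ℝ = ⟪g - g₀, v⟫_ℝ + ⟪g₀, v - v₀⟫_ℝ := by
    simp only [inner_sub_left, inner_sub_right]; ring
  rw [hsplit]
  exact (abs_add_le _ _).trans
    (add_le_add (abs_real_inner_le_norm _ _) (abs_real_inner_le_norm _ _))

theorem HasGradientAt.comp_hasDerivWithinAt {E : Type*} [NormedAddCommGroup E]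
    [InnerProductSpace ℝ E] [CompleteSpace E] {V : E → ℝ} {g : E} {x : ℝ → E} {v : E}
    {s : Set ℝ} {t : ℝ} (hV : HasGradientAt V g (x t)) (hx : HasDerivWithinAt x v s t) :
    HasDerivWithinAt (fun t => V (x t)) ⟪g, v⟫_ℝ s t :=
  hV.hasFDerivAt.comp_hasDerivWithinAt t hx

section SamplingInterval

variable {E : Type*} [NormedAddCommGroup E] [InnerProductSpace ℝ E] {x : ℝ → E} {a b : ℝ}

theorem apply_le_apply_left_of_inner_gradient_nonpos [CompleteSpace E] {V : E → ℝ}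
    {x' : ℝ → E} (hV : Differentiable ℝ V) (hx : ContinuousOn x (Icc a b))
    (hx' : ∀ t ∈ Ico a b, HasDerivWithinAt x (x' t) (Ici t) t)
    (hdecr : ∀ t ∈ Ico a b, ⟪gradient V (x t), x' t⟫_ℝ ≤ 0) : ∀ t ∈ Icc a b, V (x t) ≤ V (x a) :=
  image_le_of_deriv_right_le_deriv_boundary (hV.continuous.comp_continuousOn hx)
    (fun t ht => (hV _).hasGradientAt.comp_hasDerivWithinAt (hx' t ht)) le_rfl
    continuousOn_const (fun _ _ => hasDerivWithinAt_const _ _ _) hdecr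

/-- `exp κ` is the Grönwall factor bounding the displacement `‖x t - x a‖` over a time interval
of length at most one. -/
noncomputable def innerDriftConst (κ ν M : ℝ) : ℝ :=
  (ν * Real.exp κ * (1 + κ * Real.exp κ) + κ * Real.exp κ) * M

lemma innerDriftConst_nonneg {κ ν M : ℝ} (hκ : 0 ≤ κ) (hν : 0 ≤ ν) (hM : 0 ≤ M) :
    0 ≤ innerDriftConst κ ν M := by
  unfold innerDriftConst; positivity

lemma abs_inner_sub_inner_le_of_norm_sub_le {g f : E → E} {xs y : E} {κ ν M A τ : ℝ}
    (hκ : 0 ≤ κ) (hν : 0 ≤ ν) (hA : 0 ≤ A) (hτ0 : 0 ≤ τ) (hτ1 : τ ≤ 1)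
    (hf : ‖f y - f xs‖ ≤ κ * ‖y - xs‖) (hg : ‖g y - g xs‖ ≤ ν * ‖y - xs‖)
    (hM : ‖g xs‖ * ‖f xs‖ + ‖f xs‖ ^ 2 ≤ M * |⟪g xs, f xs⟫_ℝ|)
    (hy : ‖y - xs‖ ≤ ‖f xs‖ * τ * A) :
    |⟪g y, f y⟫_ℝ - ⟪g xs, f xs⟫_ℝ| ≤
      (ν * A * (1 + κ * A) + κ * A) * M * |⟪g xs, f xs⟫_ℝ| * τ := by
  set P := ‖f xs‖
  set G := ‖g xs‖
  set R := ‖y - xs‖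
  have hP : 0 ≤ P := norm_nonneg _
  have hG : 0 ≤ G := norm_nonneg _
  have hR : 0 ≤ R := norm_nonneg _
  have hRA : R ≤ P * A := hy.trans (by nlinarith [mul_nonneg hP hA])
  have hfy : ‖f y‖ ≤ P + κ * R := (norm_le_norm_add_norm_sub' _ _).trans (by gcongr)
  have hP2 : P ^ 2 ≤ M * |⟪g xs, f xs⟫_ℝ| := by nlinarith [mul_nonneg hG hP]
  have hGP : G * P ≤ M * |⟪g xs, f xs⟫_ℝ| := by nlinarith [sq_nonneg P]
  calc |⟪g y, f y⟫_ℝ - ⟪g xs, f xs⟫_ℝ| ≤ ‖g y - g xs‖ * ‖f y‖ + G * ‖f y - f xs‖ :=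
        abs_inner_sub_inner_le_s5 _ _ _ _
    _ ≤ ν * R * (P + κ * R) + G * (κ * R) := by gcongr
    _ ≤ ν * (P * τ * A) * (P + κ * (P * A)) + G * (κ * (P * τ * A)) := by gcongr
    _ = ν * A * (1 + κ * A) * τ * P ^ 2 + κ * A * τ * (G * P) := by ring
    _ ≤ ν * A * (1 + κ * A) * τ * (M * |⟪g xs, f xs⟫_ℝ|) +
          κ * A * τ * (M * |⟪g xs, f xs⟫_ℝ|) := by gcongr
    _ = (ν * A * (1 + κ * A) + κ * A) * M * |⟪g xs, f xs⟫_ℝ| * τ := by ring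

theorem abs_inner_sub_inner_le_of_flow {g f : E → E} {S : Set E} {κ ν M : ℝ}
    (hκ : 0 ≤ κ) (hν : 0 ≤ ν)
    (hf : ∀ y ∈ S, ‖f y - f (x a)‖ ≤ κ * ‖y - x a‖)
    (hg : ∀ y ∈ S, ‖g y - g (x a)‖ ≤ ν * ‖y - x a‖)
    (hM : ‖g (x a)‖ * ‖f (x a)‖ + ‖f (x a)‖ ^ 2 ≤ M * |⟪g (x a), f (x a)⟫_ℝ|)
    (hx : ContinuousOn x (Icc a b)) (hx' : ∀ t ∈ Ico a b, HasDerivWithinAt x (f (x t)) (Ici t) t)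
    (hS : ∀ t ∈ Icc a b, x t ∈ S) (hτ : b - a ≤ 1) :
    ∀ t ∈ Icc a b, |⟪g (x t), f (x t)⟫_ℝ - ⟪g (x a), f (x a)⟫_ℝ| ≤
      innerDriftConst κ ν M * |⟪g (x a), f (x a)⟫_ℝ| * (b - a) := by
  intro t ht
  have hP := norm_nonneg (f (x a))
  have hdisp : ‖x t - x a‖ ≤ ‖f (x a)‖ * (b - a) * Real.exp κ := by
    have hbound : ∀ s ∈ Ico a b, ‖f (x s)‖ ≤ κ * ‖x s - x a‖ + ‖f (x a)‖ := fun s hs =>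
      (norm_le_norm_add_norm_sub' _ (f (x a))).trans
        (by linarith [hf _ (hS s (Ico_subset_Icc_self hs))])
    calc ‖x t - x a‖ ≤ ‖f (x a)‖ * (t - a) * Real.exp (κ * (t - a)) :=
          norm_sub_le_mul_exp_of_norm_deriv_right_le hκ hP hx hx' hbound t ht
      _ ≤ ‖f (x a)‖ * (b - a) * Real.exp (κ * 1) := by
          have := ht.1; have := ht.2
          gcongr <;> nlinarith
      _ = ‖f (x a)‖ * (b - a) * Real.exp κ := by rw [mul_one]
  have hab : a ≤ b := ht.1.trans ht.2
  exact abs_inner_sub_inner_le_of_norm_sub_le hκ hν (Real.exp_pos κ).le (by linarith) hτ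
    (hf _ (hS t ht)) (hg _ (hS t ht)) hM hdisp

theorem one_sub_le_mul_of_event_triggered [CompleteSpace E] {V : E → ℝ} {f : E → E}
    {γ : ℝ → ℝ} {σ κ ν M L : ℝ} (hV : Differentiable ℝ V) (hVnn : ∀ y, 0 ≤ V y)
    (hγ : Differentiable ℝ γ) (hγnn : ∀ v, 0 ≤ v → 0 ≤ γ v)
    (hγ' : ∀ v, 0 ≤ v → -L ≤ deriv γ v)
    (hσ : 0 ≤ σ) (hκ : 0 ≤ κ) (hν : 0 ≤ ν) (hM0 : 0 ≤ M) (hL : 0 ≤ L)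
    (hf : ∀ y, V y ≤ V (x a) → ‖f y - f (x a)‖ ≤ κ * ‖y - x a‖)
    (hg : ∀ y, V y ≤ V (x a) → ‖gradient V y - gradient V (x a)‖ ≤ ν * ‖y - x a‖)
    (hM : ‖gradient V (x a)‖ * ‖f (x a)‖ + ‖f (x a)‖ ^ 2 ≤
      M * |⟪gradient V (x a), f (x a)⟫_ℝ|)
    (hfeed : ⟪gradient V (x a), f (x a)⟫_ℝ ≤ -γ (V (x a))) (hγa : 0 < γ (V (x a)))
    (hx : ContinuousOn x (Icc a b)) (hx' : ∀ t ∈ Ico a b, HasDerivWithinAt x (f (x t)) (Ici t) t)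
    (hW : ∀ t ∈ Icc a b, ⟪gradient V (x t), f (x t)⟫_ℝ ≤ -σ * γ (V (x t)))
    (htrig : ⟪gradient V (x b), f (x b)⟫_ℝ = -σ * γ (V (x b)))
    (hab : a ≤ b) (hτ : b - a ≤ 1) :
    1 - σ ≤ (innerDriftConst κ ν M + σ * L * (1 + innerDriftConst κ ν M)) * (b - a) := by
  set φ : ℝ → ℝ := fun t => ⟪gradient V (x t), f (x t)⟫_ℝ
  set w := -φ a
  set C := innerDriftConst κ ν M
  have hC : 0 ≤ C := innerDriftConst_nonneg hκ hν hM0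
  have hw : 0 < w := by simp only [w, φ]; linarith
  have hwa : |φ a| = w := abs_of_neg (neg_pos.1 hw)
  have hsub : ∀ t ∈ Icc a b, V (x t) ≤ V (x a) :=
    apply_le_apply_left_of_inner_gradient_nonpos hV hx hx' fun t ht =>
      (hW t (Ico_subset_Icc_self ht)).trans
        (by nlinarith [hγnn _ (hVnn (x t))])
  have hdrift : ∀ t ∈ Icc a b, |φ t - φ a| ≤ C * w * (b - a) := by
    rw [← hwa]
    exact abs_inner_sub_inner_le_of_flow (S := {y | V y ≤ V (x a)}) hκ hν hf hg hM hx hx' hsub hτ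
  have hb : b ∈ Icc a b := right_mem_Icc.2 hab
  have hΔV : V (x a) - V (x b) ≤ (1 + C) * w * (b - a) := by
    have hφ : ∀ t ∈ Ico a b, ‖φ t‖ ≤ (1 + C) * w := fun t ht => by
      have := hdrift t (Ico_subset_Icc_self ht)
      have : C * w * (b - a) ≤ C * w * 1 := by gcongr
      rw [Real.norm_eq_abs]
      calc |φ t| ≤ |φ a| + |φ t - φ a| := by linarith [abs_sub_abs_le_abs_sub (φ t) (φ a)]
        _ ≤ w + C * w * 1 := by rw [hwa]; linarith
        _ = (1 + C) * w := by ring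
    have := norm_image_sub_le_of_norm_deriv_right_le_segment
      (hV.continuous.comp_continuousOn hx)
      (fun t ht => (hV _).hasGradientAt.comp_hasDerivWithinAt (hx' t ht)) hφ b hb
    rw [Real.norm_eq_abs, abs_sub_comm] at this
    exact (le_abs_self _).trans this
  have hγb : γ (V (x b)) ≤ γ (V (x a)) + L * (V (x a) - V (x b)) := by
    have := (convex_Ici 0).mul_sub_le_image_sub_of_le_deriv hγ.continuous.continuousOn
      hγ.differentiableOn (fun v hv => hγ' v (interior_subset hv))
      _ (hVnn (x b)) _ (hVnn (x a)) (hsub b hb)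
    linarith
  have hφb : φ b ≤ -w + C * w * (b - a) := by
    have := hdrift b hb
    rw [abs_le] at this
    linarith
  -- `-σ (γ (V (x a)) + L ΔV) ≤ -σ γ (V (x b)) = φ b ≤ -w + C w (b - a)`
  have key : (1 - σ) * w ≤ (C + σ * L * (1 + C)) * (b - a) * w := by
    nlinarith [mul_le_mul_of_nonneg_left hΔV (mul_nonneg hσ hL),
      mul_le_mul_of_nonneg_left hγb hσ]
  exact le_of_mul_le_mul_right key hw

end SamplingInterval

theorem statement5_general
    (d m : ℕ)
    (F : EuclideanSpace ℝ (Fin d) → EuclideanSpace ℝ (Fin m) → EuclideanSpace ℝ (Fin d))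
    (𝒰 : EuclideanSpace ℝ (Fin d) → EuclideanSpace ℝ (Fin m))
    (V : EuclideanSpace ℝ (Fin d) → ℝ) (γ : ℝ → ℝ) (σ : ℝ)
    (hσ0 : 0 < σ) (hσ1 : σ < 1)
    (hγpos : ∀ v : ℝ, 0 < v → 0 < γ v)
    (hV : ContDiff ℝ 1 V) (hV0 : V 0 = 0) (hVpos : ∀ x, x ≠ 0 → 0 < V x)
    (hfeed : ∀ x, x ≠ 0 → ⟪gradient V x, F x (𝒰 x)⟫_ℝ ≤ -γ (V x))
    -- Assumption 2, with `κ` globally bounded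
    (κ : EuclideanSpace ℝ (Fin d) → ℝ)
    (hκlip : ∀ xs x1 x2 : EuclideanSpace ℝ (Fin d), V x1 ≤ V xs → V x2 ≤ V xs →
      ‖F x1 (𝒰 xs) - F x2 (𝒰 xs)‖ ≤ κ xs * ‖x1 - x2‖)
    (hκglob : ∃ C : ℝ, ∀ x, κ x ≤ C)
    -- Assumption 3, with `ν` globally bounded
    (ν : EuclideanSpace ℝ (Fin d) → ℝ)
    (hνlip : ∀ xs x1 x2 : EuclideanSpace ℝ (Fin d), V x1 ≤ V xs → V x2 ≤ V xs →
      ‖gradient V x1 - gradient V x2‖ ≤ ν xs * ‖x1 - x2‖)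
    (hνglob : ∃ C : ℝ, ∀ x, ν x ≤ C)
    -- Assumption 4', with `M` globally bounded
    (M : EuclideanSpace ℝ (Fin d) → ℝ)
    (hMglob : ∃ C : ℝ, ∀ x, M x ≤ C)
    (hMineq : ∀ x, ‖gradient V x‖ * ‖F x (𝒰 x)‖ + ‖F x (𝒰 x)‖ ^ 2 ≤
      M x * |⟪gradient V x, F x (𝒰 x)⟫_ℝ|)
    -- `γ` is `C¹` with derivative bounded below on `[0,∞)`
    (hγ1 : ContDiff ℝ 1 γ)
    (hγ' : ∃ c : ℝ, ∀ v : ℝ, 0 ≤ v → c ≤ deriv γ v) :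
    ∃ ε > (0 : ℝ),
      ∀ (T : ℝ) (x : ℝ → EuclideanSpace ℝ (Fin d)) (ts : ℕ → ℝ),
        ContinuousOn x (Ico (0 : ℝ) T) →
        ts 0 = 0 → StrictMono ts → (∀ n : ℕ, ts (n + 1) < T) →
        (∀ n : ℕ, x (ts n) ≠ 0) →
        (∀ n : ℕ, ∀ s ∈ Ico (ts n) (ts (n + 1)),
          HasDerivWithinAt x (F (x s) (𝒰 (x (ts n)))) (Ico (ts n) (ts (n + 1))) s) →
        (∀ n : ℕ, ∀ s ∈ Icc (ts n) (ts (n + 1)),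
          ⟪gradient V (x s), F (x s) (𝒰 (x (ts n)))⟫_ℝ ≤ -σ * γ (V (x s))) →
        (∀ n : ℕ, ⟪gradient V (x (ts (n + 1))), F (x (ts (n + 1))) (𝒰 (x (ts n)))⟫_ℝ =
          -σ * γ (V (x (ts (n + 1))))) →
        ∀ n : ℕ, ε ≤ ts (n + 1) - ts n := by
  obtain ⟨Cκ, hCκ⟩ := hκglob
  obtain ⟨Cν, hCν⟩ := hνglob
  obtain ⟨CM, hCM⟩ := hMglob
  obtain ⟨c, hc⟩ := hγ'
  have hVnn : ∀ y, 0 ≤ V y := fun y => by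
    rcases eq_or_ne y 0 with rfl | hy
    exacts [hV0.ge, (hVpos y hy).le]
  have hγnn : ∀ v, 0 ≤ v → 0 ≤ γ v := fun v hv =>
    closure_minimal (s := Ioi 0) (fun w hw => (hγpos w hw).le)
      (isClosed_le continuous_const hγ1.continuous) (by rwa [closure_Ioi])
  set C := innerDriftConst (max Cκ 0) (max Cν 0) (max CM 0)
  set D := C + σ * max (-c) 0 * (1 + C)
  have hD : 0 ≤ D := by
    have := innerDriftConst_nonneg (le_max_right Cκ 0) (le_max_right Cν 0) (le_max_right CM 0)
    positivity
  refine ⟨min 1 ((1 - σ) / (D + 1)), lt_min one_pos (by have := sub_pos.2 hσ1; positivity), ?_⟩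
  intro T x ts hxc hts0 htsm htsT hne hde hW htrig n
  have hab : ts n < ts (n + 1) := htsm n.lt_succ_self
  obtain hτ | hτ := le_or_gt 1 (ts (n + 1) - ts n)
  · exact (min_le_left _ _).trans hτ
  have hsub : Icc (ts n) (ts (n + 1)) ⊆ Ico 0 T := fun t ht =>
    ⟨(hts0 ▸ htsm.monotone n.zero_le).trans ht.1, ht.2.trans_lt (htsT n)⟩
  have key := one_sub_le_mul_of_event_triggered (f := fun y => F y (𝒰 (x (ts n))))
    (hV.differentiable one_ne_zero) hVnn (hγ1.differentiable one_ne_zero) hγnn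
    (fun v hv => (neg_le.1 (le_max_left _ _)).trans (hc v hv)) hσ0.le (le_max_right Cκ 0)
    (le_max_right Cν 0) (le_max_right CM 0) (le_max_right _ _)
    (fun y hy => (hκlip _ y _ hy le_rfl).trans (by gcongr; exact (hCκ _).trans (le_max_left _ _)))
    (fun y hy => (hνlip _ y _ hy le_rfl).trans (by gcongr; exact (hCν _).trans (le_max_left _ _)))
    ((hMineq _).trans (by gcongr; exact (hCM _).trans (le_max_left _ _)))
    (hfeed _ (hne n)) (hγpos _ (hVpos _ (hne n))) (hxc.mono hsub)
    (fun t ht => (hde n t ht).mono_of_mem_nhdsWithin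
      (Filter.mem_of_superset (Ico_mem_nhdsGE ht.2) (Ico_subset_Ico_left ht.1)))
    (hW n) (htrig n) hab.le hτ.le
  refine (min_le_right _ _).trans ((div_le_iff₀ (by positivity)).2 ?_)
  nlinarith

/-- Global dwell-time positivity. Under Assumptions 1–4' with `κ`, `ν`, `M`
globally bounded, `γ ∈ C¹` and `inf_{v≥0} γ'(v) > -∞`, there is `ε > 0` independent of the
initial condition, such that every trajectory of the event-triggered algorithm has
inter-sampling times `t_{n+1} - t_n ≥ ε`. -/
theorem statement5
    (d m : ℕ)
    (F : EuclideanSpace ℝ (Fin d) → EuclideanSpace ℝ (Fin m) → EuclideanSpace ℝ (Fin d))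
    (U : Set (EuclideanSpace ℝ (Fin m)))
    (𝒰 : EuclideanSpace ℝ (Fin d) → EuclideanSpace ℝ (Fin m))
    (V : EuclideanSpace ℝ (Fin d) → ℝ) (γ : ℝ → ℝ) (σ : ℝ)
    (hσ0 : 0 < σ) (hσ1 : σ < 1)
    (hγc : Continuous γ) (hγpos : ∀ v : ℝ, 0 < v → 0 < γ v)
    (hV : ContDiff ℝ 1 V) (hV0 : V 0 = 0) (hVpos : ∀ x, x ≠ 0 → 0 < V x)
    (hVrad : ∀ c : ℝ, ∃ R : ℝ, ∀ x : EuclideanSpace ℝ (Fin d), R ≤ ‖x‖ → c ≤ V x)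
    (h𝒰U : ∀ x, 𝒰 x ∈ U)
    (hfeed : ∀ x, x ≠ 0 → ⟪gradient V x, F x (𝒰 x)⟫_ℝ ≤ -γ (V x))
    -- Assumption 1
    (hF : ∀ u ∈ U, LocallyLipschitz (fun x => F x u))
    -- Assumption 2, with `κ` globally bounded
    (κ : EuclideanSpace ℝ (Fin d) → ℝ)
    (hκlip : ∀ xs x1 x2 : EuclideanSpace ℝ (Fin d), V x1 ≤ V xs → V x2 ≤ V xs →
      ‖F x1 (𝒰 xs) - F x2 (𝒰 xs)‖ ≤ κ xs * ‖x1 - x2‖)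
    (hκglob : ∃ C : ℝ, ∀ x, κ x ≤ C)
    -- Assumption 3, with `ν` globally bounded
    (hgradlip : LocallyLipschitz (gradient V))
    (ν : EuclideanSpace ℝ (Fin d) → ℝ)
    (hνlip : ∀ xs x1 x2 : EuclideanSpace ℝ (Fin d), V x1 ≤ V xs → V x2 ≤ V xs →
      ‖gradient V x1 - gradient V x2‖ ≤ ν xs * ‖x1 - x2‖)
    (hνglob : ∃ C : ℝ, ∀ x, ν x ≤ C)
    -- Assumption 4', with `M` globally bounded
    (M : EuclideanSpace ℝ (Fin d) → ℝ) (hMpos : ∀ x, 0 < M x)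
    (hMglob : ∃ C : ℝ, ∀ x, M x ≤ C)
    (hMineq : ∀ x, ‖gradient V x‖ * ‖F x (𝒰 x)‖ + ‖F x (𝒰 x)‖ ^ 2 ≤
      M x * |⟪gradient V x, F x (𝒰 x)⟫_ℝ|)
    -- `γ` is `C¹` with derivative bounded below on `[0,∞)`
    (hγ1 : ContDiff ℝ 1 γ)
    (hγ' : ∃ c : ℝ, ∀ v : ℝ, 0 ≤ v → c ≤ deriv γ v) :
    ∃ ε > (0 : ℝ),
      ∀ (T : ℝ) (x : ℝ → EuclideanSpace ℝ (Fin d)) (ts : ℕ → ℝ),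
        ContinuousOn x (Ico (0 : ℝ) T) →
        ts 0 = 0 → StrictMono ts → (∀ n : ℕ, ts (n + 1) < T) →
        (∀ n : ℕ, x (ts n) ≠ 0) →
        (∀ n : ℕ, ∀ s ∈ Ico (ts n) (ts (n + 1)),
          HasDerivWithinAt x (F (x s) (𝒰 (x (ts n)))) (Ico (ts n) (ts (n + 1))) s) →
        (∀ n : ℕ, ∀ s ∈ Icc (ts n) (ts (n + 1)),
          ⟪gradient V (x s), F (x s) (𝒰 (x (ts n)))⟫_ℝ ≤ -σ * γ (V (x s))) →
        (∀ n : ℕ, ⟪gradient V (x (ts (n + 1))), F (x (ts (n + 1))) (𝒰 (x (ts n)))⟫_ℝ =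
          -σ * γ (V (x (ts (n + 1))))) →
        ∀ n : ℕ, ε ≤ ts (n + 1) - ts n :=
  statement5_general d m F 𝒰 V γ σ hσ0 hσ1 hγpos hV hV0 hVpos hfeed κ hκlip hκglob ν hνlip hνglob M
    hMglob hMineq hγ1 hγ'
end
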